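/- arXiv:2110.04667 — 2 statements merged into one kernel-verified Lean document; each statement's English description precedes it below -/
import Mathlib

section
/- Let 0 < ρ < 1, 0 < θ ≤ π/2, r ≥ 0 and v > 0 be real numbers satisfying (1 − ρ)/v < 2(ρ·sin θ − r). Then there do not exist a 1-Lipschitz map γ : ℝ → ℝ², real times t ≤ s with s − t ≤ (1 − ρ)/v, and radii x₁, x₂ ∈ [ρ, 1], such that dist(γ(t), (x₁·cos θ, x₁·sin θ)) ≤ r and dist(γ(s), (x₂·cos θ, −x₂·sin θ)) ≤ r. -/
/-!
The intruder on the ray at angle `θ` and the one on the ray at angle `-θ` lie on opposite sides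
of the horizontal axis, each at height at least `ρ sin θ`, so they are at least `2 ρ sin θ` apart.
A unit-speed vehicle that comes within `r` of both needs time at least `2 ρ sin θ - 2 r` between
the two captures, which exceeds the time `(1 - ρ) / v` the second intruder spends in flight.
-/

open Real

theorem LipschitzWith.dist_le_of_dist_le {α : Type*} [PseudoMetricSpace α] {γ : ℝ → α}
    (hγ : LipschitzWith 1 γ) {t s r : ℝ} {p q : α}
    (hp : dist (γ t) p ≤ r) (hq : dist (γ s) q ≤ r) :
    dist p q ≤ 2 * r + dist t s := by
  have hts : dist (γ t) (γ s) ≤ dist t s := by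
    simpa using hγ.dist_le_mul t s
  calc dist p q ≤ dist p (γ t) + dist (γ t) (γ s) + dist (γ s) q := dist_triangle4 _ _ _ _
    _ ≤ 2 * r + dist t s := by rw [dist_comm p]; linarith

theorem two_mul_mul_sin_le_dist_of_le {ρ θ x₁ x₂ : ℝ} (hsin : 0 ≤ sin θ)
    (hx₁ : ρ ≤ x₁) (hx₂ : ρ ≤ x₂) :
    2 * (ρ * sin θ) ≤
      dist (!₂[x₁ * cos θ, x₁ * sin θ]) (!₂[x₂ * cos θ, -(x₂ * sin θ)]) := by
  calc 2 * (ρ * sin θ) ≤ x₁ * sin θ - -(x₂ * sin θ) := by nlinarith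
    _ ≤ dist (x₁ * sin θ) (-(x₂ * sin θ)) := le_abs_self _
    _ ≤ _ := PiLp.dist_apply_le (!₂[x₁ * cos θ, x₁ * sin θ]) (!₂[x₂ * cos θ, -(x₂ * sin θ)]) 1

theorem stmt_5_general (ρ θ r v : ℝ) (hθ0 : 0 < θ)
    (hθ : θ ≤ π / 2)
    (hcond : (1 - ρ) / v < 2 * (ρ * Real.sin θ - r)) :
    ¬ ∃ (γ : ℝ → EuclideanSpace ℝ (Fin 2)) (t s x₁ x₂ : ℝ),
        LipschitzWith 1 γ ∧ t ≤ s ∧ s - t ≤ (1 - ρ) / v ∧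
        x₁ ∈ Set.Icc ρ 1 ∧ x₂ ∈ Set.Icc ρ 1 ∧
        dist (γ t) (!₂[x₁ * Real.cos θ, x₁ * Real.sin θ]) ≤ r ∧
        dist (γ s) (!₂[x₂ * Real.cos θ, -(x₂ * Real.sin θ)]) ≤ r := by
  rintro ⟨γ, t, s, x₁, x₂, hγ, hts, hflight, ⟨hx₁, -⟩, ⟨hx₂, -⟩, hcapture₁, hcapture₂⟩
  have hsin : 0 ≤ sin θ := sin_nonneg_of_nonneg_of_le_pi hθ0.le (by linarith [pi_pos])
  have hsep := two_mul_mul_sin_le_dist_of_le hsin hx₁ hx₂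
  have hreach := hγ.dist_le_of_dist_le hcapture₁ hcapture₂
  rw [Real.dist_eq, abs_sub_comm, abs_of_nonneg (sub_nonneg.mpr hts)] at hreach
  linarith

/-- Geometric core of Theorem 1 (case `θ < π/2`): if `(1 − ρ)/v < 2 (ρ sin θ − r)`,
then no unit-speed (1-Lipschitz) trajectory can come within capture radius `r` of a
point at radius `x₁ ∈ [ρ, 1]` on the ray at angle `θ` at some time `t` and also come
within `r` of a point at radius `x₂ ∈ [ρ, 1]` on the ray at angle `−θ` at a time
`s ≥ t` with `s − t ≤ (1 − ρ)/v`. -/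
theorem stmt_5 (ρ θ r v : ℝ) (hρ0 : 0 < ρ) (hρ1 : ρ < 1) (hθ0 : 0 < θ)
    (hθ : θ ≤ π / 2) (hr : 0 ≤ r) (hv : 0 < v)
    (hcond : (1 - ρ) / v < 2 * (ρ * Real.sin θ - r)) :
    ¬ ∃ (γ : ℝ → EuclideanSpace ℝ (Fin 2)) (t s x₁ x₂ : ℝ),
        LipschitzWith 1 γ ∧ t ≤ s ∧ s - t ≤ (1 - ρ) / v ∧
        x₁ ∈ Set.Icc ρ 1 ∧ x₂ ∈ Set.Icc ρ 1 ∧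
        dist (γ t) (!₂[x₁ * Real.cos θ, x₁ * Real.sin θ]) ≤ r ∧
        dist (γ s) (!₂[x₂ * Real.cos θ, -(x₂ * Real.sin θ)]) ≤ r :=
  stmt_5_general ρ θ r v hθ0 hθ hcond
end

section
/- Let 0 < v ≤ 1 and let ρ, θ be real numbers with 0 < ρ < 1. Then for every x ∈ [ρ, 1], one has (1 − x)/v + √(x² + ρ² − 2xρ·cos 2θ) ≥ √(1 + ρ² − 2ρ·cos 2θ). -/
open Real

/-- Minimum-intercept-time claim in the proof of Theorem 2: for every `x ∈ [ρ, 1]`,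
`(1 − x)/v + √(x² + ρ² − 2xρ cos 2θ) ≥ √(1 + ρ² − 2ρ cos 2θ)`. -/
theorem stmt_11 (v ρ θ : ℝ) (hv0 : 0 < v) (hv1 : v ≤ 1) (hρ0 : 0 < ρ) (hρ1 : ρ < 1) :
    ∀ x ∈ Set.Icc ρ 1,
      (1 - x) / v + Real.sqrt (x ^ 2 + ρ ^ 2 - 2 * x * ρ * Real.cos (2 * θ)) ≥
        Real.sqrt (1 + ρ ^ 2 - 2 * ρ * Real.cos (2 * θ)) := by
  intro x hx
  obtain ⟨hxρ, hx1⟩ := hx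
  set c := Real.cos (2 * θ) with hc
  have hc1 : -1 ≤ c := Real.neg_one_le_cos _
  have hc2 : c ≤ 1 := Real.cos_le_one _
  have hx0 : 0 < x := lt_of_lt_of_le hρ0 hxρ
  have hD : 0 ≤ x ^ 2 + ρ ^ 2 - 2 * x * ρ * c := by
    nlinarith [sq_nonneg (x - ρ * c), mul_nonneg (sq_nonneg ρ) (sub_nonneg.mpr hc2),
      sq_nonneg (1 - c), sq_nonneg (1 + c)]
  set s := Real.sqrt (x ^ 2 + ρ ^ 2 - 2 * x * ρ * c) with hs
  have hs0 : 0 ≤ s := Real.sqrt_nonneg _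
  have hssq : s ^ 2 = x ^ 2 + ρ ^ 2 - 2 * x * ρ * c := Real.sq_sqrt hD
  have hslb : x - ρ * c ≤ s := by
    nlinarith [mul_nonneg (mul_nonneg (sq_nonneg ρ) (sub_nonneg.mpr hc2))
      (by linarith : (0:ℝ) ≤ 1 + c), sq_nonneg (s - (x - ρ * c)), hs0]
  have key : 1 + ρ ^ 2 - 2 * ρ * c ≤ ((1 - x) + s) ^ 2 := by
    nlinarith [mul_nonneg (sub_nonneg.mpr hx1) (sub_nonneg.mpr hslb)]
  have htri : Real.sqrt (1 + ρ ^ 2 - 2 * ρ * c) ≤ (1 - x) + s := by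
    calc Real.sqrt (1 + ρ ^ 2 - 2 * ρ * c) ≤ Real.sqrt (((1 - x) + s) ^ 2) :=
          Real.sqrt_le_sqrt key
      _ = (1 - x) + s := Real.sqrt_sq (by linarith)
  have hdiv : 1 - x ≤ (1 - x) / v := by
    rw [le_div_iff₀ hv0]
    nlinarith
  linarith
end
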